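/- Fix natural numbers n ≤ k and N_b ≥ n, reals α, p_t ∈ [0,1], and set τ = α·p_t. Consider the product probability space where: (i) a receiver independently 'listens' with probability α·(1−p_t); (ii) each of N_b neighbors independently either transmits toward the receiver with a modulation mode m ∈ Fin k, each such pair (transmit, m) having probability τ/k, or does not transmit toward the receiver with probability 1−τ. Fix a set J of exactly n of the N_b neighbors. Then the probability of the event {the receiver listens, every neighbor in J transmits toward the receiver, the modulation modes of the neighbors in J are pairwise distinct, and no neighbor outside J transmits toward the receiver with a modulation mode equal to one used by a neighbor of J} equals α(1−p_t) · τ^n · (k·(k−1)···(k−n+1)/k^n) · (1 − nτ/k)^{N_b − n}. -/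

import Mathlib

section Aux

open Finset

variable {n k Nb : ℕ}

private lemma aux_sum (n k Nb : ℕ) (J : Finset (Fin Nb)) (hJ : J.card = n) (c d : ℝ) :
    (∑ f : Fin Nb → Option (Fin k),
      if ((∀ j ∈ J, (f j).isSome = true) ∧
          (∀ i : Fin Nb, ∀ j ∈ J, i ≠ j → f i ≠ f j)) then
        (∏ i : Fin Nb, (f i).elim c (fun _ => d)) else 0)
    = (k.descFactorial n : ℝ) * d ^ n * (c + ((k : ℝ) - n) * d) ^ (Nb - n) := by
  classical
  set w : Option (Fin k) → ℝ := fun o => o.elim c (fun _ => d) with hw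
  set e := Equiv.piEquivPiSubtypeProd (fun i : Fin Nb => i ∈ J) (fun _ => Option (Fin k)) with he
  set Q : ({x : Fin Nb // x ∈ J} → Option (Fin k)) → Prop :=
    fun u => (∀ a, (u a).isSome = true) ∧ Function.Injective u with hQ
  set R : ({x : Fin Nb // x ∈ J} → Option (Fin k)) →
      ({x : Fin Nb // ¬ x ∈ J} → Option (Fin k)) → Prop :=
    fun u v => ∀ b a, v b ≠ u a with hR
  have hcardJ : Fintype.card {x : Fin Nb // x ∈ J} = n := by
    simpa [Fintype.card_coe] using hJ
  have hcardJc : Fintype.card {x : Fin Nb // ¬ x ∈ J} = Nb - n := by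
    rw [Fintype.card_subtype_compl, hcardJ, Fintype.card_fin]
  -- decompose the sum along the equivalence
  rw [← Equiv.sum_comp e.symm, Fintype.sum_prod_type]
  have hcond : ∀ (u : {x : Fin Nb // x ∈ J} → Option (Fin k))
      (v : {x : Fin Nb // ¬ x ∈ J} → Option (Fin k)),
      ((∀ j ∈ J, ((e.symm (u, v)) j).isSome = true) ∧
        (∀ i : Fin Nb, ∀ j ∈ J, i ≠ j → (e.symm (u, v)) i ≠ (e.symm (u, v)) j))
      ↔ Q u ∧ R u v := by
    intro u v
    simp only [he, Equiv.piEquivPiSubtypeProd_symm_apply, hQ, hR]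
    constructor
    · rintro ⟨h1, h2⟩
      refine ⟨⟨fun a => ?_, fun a a' huv => ?_⟩, fun b a => ?_⟩
      · have := h1 a.1 a.2; rwa [dif_pos a.2] at this
      · by_contra hne
        have hne2 : a.1 ≠ a'.1 := fun h => hne (Subtype.ext h)
        have := h2 a.1 a'.1 a'.2 hne2
        rw [dif_pos a.2, dif_pos a'.2] at this
        exact this (by simpa using huv)
      · have hne2 : b.1 ≠ a.1 := fun h => b.2 (h ▸ a.2)
        have := h2 b.1 a.1 a.2 hne2
        rwa [dif_neg b.2, dif_pos a.2] at this
    · rintro ⟨⟨hsome, hinj⟩, hcross⟩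
      refine ⟨fun j hj => ?_, fun i j hj hij => ?_⟩
      · rw [dif_pos hj]; exact hsome ⟨j, hj⟩
      · rw [dif_pos hj]
        by_cases hi : i ∈ J
        · rw [dif_pos hi]
          intro hcontra
          exact hij (congrArg Subtype.val (hinj (by simpa using hcontra)))
        · rw [dif_neg hi]
          exact hcross ⟨i, hi⟩ ⟨j, hj⟩
  have hprod : ∀ (u : {x : Fin Nb // x ∈ J} → Option (Fin k))
      (v : {x : Fin Nb // ¬ x ∈ J} → Option (Fin k)),
      (∏ i : Fin Nb, w ((e.symm (u, v)) i)) = (∏ a, w (u a)) * (∏ b, w (v b)) := by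
    intro u v
    rw [← Fintype.prod_subtype_mul_prod_subtype (fun i : Fin Nb => i ∈ J)
      (fun i => w ((e.symm (u, v)) i))]
    congr 1
    · refine Finset.prod_congr (by congr!) fun a _ => by
        simp [he, Equiv.piEquivPiSubtypeProd_symm_apply, a.2]
    · refine Finset.prod_congr (by congr!) fun b _ => by
        simp [he, Equiv.piEquivPiSubtypeProd_symm_apply, b.2]
  have step : ∀ (u : {x : Fin Nb // x ∈ J} → Option (Fin k))
      (v : {x : Fin Nb // ¬ x ∈ J} → Option (Fin k)),
      (if ((∀ j ∈ J, ((e.symm (u, v)) j).isSome = true) ∧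
            (∀ i : Fin Nb, ∀ j ∈ J, i ≠ j → (e.symm (u, v)) i ≠ (e.symm (u, v)) j)) then
          (∏ i : Fin Nb, ((e.symm (u, v)) i).elim c (fun _ => d)) else 0)
      = (if Q u then ∏ a, w (u a) else 0) * (if R u v then ∏ b, w (v b) else 0) := by
    intro u v
    have : (∏ i : Fin Nb, ((e.symm (u, v)) i).elim c (fun _ => d))
        = (∏ a, w (u a)) * (∏ b, w (v b)) := hprod u v
    rw [if_congr (hcond u v) this rfl, ite_and]
    by_cases hu : Q u
    · by_cases hv : R u v
      · rw [if_pos hu, if_pos hv, if_pos hu, if_pos hv]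
      · rw [if_pos hu, if_neg hv, if_pos hu, if_neg hv, mul_zero]
    · rw [if_neg hu, if_neg hu, zero_mul]
  simp_rw [step, ← Finset.mul_sum]
  -- inner sum over v, for fixed u satisfying Q
  have inner : ∀ u, Q u →
      (∑ v : {x : Fin Nb // ¬ x ∈ J} → Option (Fin k),
        if R u v then ∏ b, w (v b) else 0) = (c + ((k : ℝ) - n) * d) ^ (Nb - n) := by
    intro u hu
    set U : Finset (Option (Fin k)) := Finset.image u Finset.univ with hU
    have hUcard : U.card = n := by
      rw [hU, Finset.card_image_of_injective _ hu.2, Finset.card_univ, hcardJ]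
    have hmem : ∀ v, R u v ↔ ∀ b, v b ∈ (Finset.univ \ U) := by
      intro v
      constructor
      · intro h b
        rw [Finset.mem_sdiff]
        refine ⟨Finset.mem_univ _, fun hmemb => ?_⟩
        obtain ⟨a, -, ha⟩ := Finset.mem_image.mp hmemb
        exact h b a ha.symm
      · intro h b a hba
        exact (Finset.mem_sdiff.mp (h b)).2
          (Finset.mem_image.mpr ⟨a, Finset.mem_univ a, hba.symm⟩)
    have hav : (∑ x ∈ Finset.univ \ U, w x) = c + ((k : ℝ) - n) * d := by
      rw [Finset.sum_sdiff_eq_sub (Finset.subset_univ U)]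
      have h1 : (∑ x : Option (Fin k), w x) = c + k * d := by
        rw [Fintype.sum_option]
        simp [hw, Finset.sum_const, Finset.card_univ, mul_comm]
      have h2 : (∑ x ∈ U, w x) = n * d := by
        rw [hU, Finset.sum_image (fun a _ a' _ h => hu.2 h)]
        have : ∀ a, w (u a) = d := by
          intro a
          obtain ⟨m, hm⟩ := Option.isSome_iff_exists.mp (hu.1 a)
          simp [hw, hm]
        rw [Finset.sum_congr rfl fun a _ => this a, Finset.sum_const, Finset.card_univ,
          hcardJ, nsmul_eq_mul]
      rw [h1, h2]; ring
    calc (∑ v : {x : Fin Nb // ¬ x ∈ J} → Option (Fin k),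
          if R u v then ∏ b, w (v b) else 0)
        = ∑ v ∈ Finset.univ.filter (fun v => R u v), ∏ b, w (v b) := by
          rw [Finset.sum_filter]
      _ = ∑ v ∈ Fintype.piFinset (fun _ : {x : Fin Nb // ¬ x ∈ J} => Finset.univ \ U),
            ∏ b, w (v b) := by
          apply Finset.sum_congr _ fun _ _ => rfl
          ext v
          simp [Fintype.mem_piFinset, hmem v]
      _ = ∏ _b : {x : Fin Nb // ¬ x ∈ J}, (∑ x ∈ Finset.univ \ U, w x) := by
          rw [Finset.prod_univ_sum]
      _ = (c + ((k : ℝ) - n) * d) ^ (Nb - n) := by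
          rw [Finset.prod_const, hav, Finset.card_univ, hcardJc]
  -- rewrite each outer summand
  have outer : ∀ u, (if Q u then ∏ a, w (u a) else 0) *
      (∑ v : {x : Fin Nb // ¬ x ∈ J} → Option (Fin k), if R u v then ∏ b, w (v b) else 0)
      = (if Q u then d ^ n * (c + ((k : ℝ) - n) * d) ^ (Nb - n) else 0) := by
    intro u
    by_cases hu : Q u
    · rw [if_pos hu, if_pos hu, inner u hu]
      congr 1
      have : ∀ a, w (u a) = d := by
        intro a
        obtain ⟨m, hm⟩ := Option.isSome_iff_exists.mp (hu.1 a)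
        simp [hw, hm]
      rw [Finset.prod_congr rfl fun a _ => this a, Finset.prod_const, Finset.card_univ, hcardJ]
    · rw [if_neg hu, if_neg hu, zero_mul]
  simp_rw [outer]
  rw [← Finset.sum_filter, Finset.sum_const, nsmul_eq_mul]
  have hcount : (Finset.univ.filter Q).card = k.descFactorial n := by
    have h1 : (Finset.univ.filter Q).card = Fintype.card {u // Q u} :=
      (Fintype.card_subtype Q).symm
    have h2 : Fintype.card {u : {x : Fin Nb // x ∈ J} → Option (Fin k) // Q u}
        = Fintype.card ({x : Fin Nb // x ∈ J} ↪ Fin k) := by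
      apply Fintype.card_congr
      refine ⟨fun u => ⟨fun a => (u.1 a).get (u.2.1 a), fun a a' h => ?_⟩,
        fun g => ⟨fun a => some (g a),
          ⟨fun a => rfl, fun a a' h => g.injective (Option.some_injective _ h)⟩⟩,
        fun u => ?_, fun g => ?_⟩
      · apply u.2.2
        rw [← Option.some_get (u.2.1 a), ← Option.some_get (u.2.1 a')]
        exact congrArg some h
      · apply Subtype.ext
        funext a
        exact Option.some_get (u.2.1 a)
      · apply DFunLike.ext
        intro a
        rfl
    rw [h1, h2, Fintype.card_embedding_eq, Fintype.card_fin, hcardJ]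
  rw [hcount]
  ring

end Aux

/-- probability `p_h(n)` of Lemma 1.  An outcome consists of a Bool
(whether the receiver listens, which has probability `α(1−p_t)`) together with,
for each of the `N_b` neighbors, either `some m` (it transmits toward the
receiver with modulation mode `m : Fin k`, probability `τ/k` for each pair) or
`none` (it does not transmit toward the receiver, probability `1 − τ`), all
independent, where `τ = α·p_t`.  For a fixed set `J` of `n` neighbors, the
probability that the receiver listens, every neighbor of `J` transmits, the
modes used by `J` are pairwise distinct, and no neighbor outside `J` transmits
with a mode used by a neighbor of `J`, equals
`α(1−p_t) · τ^n · (k·(k−1)···(k−n+1)/k^n) · (1 − nτ/k)^{N_b−n}`. -/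
theorem stmt_1 (n k Nb : ℕ) (hnk : n ≤ k) (hnNb : n ≤ Nb) (hk : 1 ≤ k)
    (α pt : ℝ) (hα0 : 0 ≤ α) (hα1 : α ≤ 1) (hpt0 : 0 ≤ pt) (hpt1 : pt ≤ 1)
    (J : Finset (Fin Nb)) (hJ : J.card = n) :
    (∑ ω ∈ (Finset.univ.filter
        (fun ω : Bool × (Fin Nb → Option (Fin k)) =>
          ω.1 = true ∧ (∀ j ∈ J, (ω.2 j).isSome = true) ∧
          (∀ i : Fin Nb, ∀ j ∈ J, i ≠ j → ω.2 i ≠ ω.2 j))),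
      (if ω.1 then α * (1 - pt) else 1 - α * (1 - pt)) *
        ∏ i : Fin Nb, (ω.2 i).elim (1 - α * pt) (fun _ => α * pt / k))
    = α * (1 - pt) * (α * pt) ^ n * ((k.descFactorial n : ℝ) / (k : ℝ) ^ n) *
        (1 - (n : ℝ) * (α * pt) / k) ^ (Nb - n) := by
  classical
  have hk0 : (k : ℝ) ≠ 0 := Nat.cast_ne_zero.mpr (by omega)
  rw [Finset.sum_filter, Fintype.sum_prod_type, Fintype.sum_bool]
  simp only [Bool.false_eq_true, false_and, if_false, Finset.sum_const_zero, add_zero,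
    true_and, if_true]
  have key := aux_sum n k Nb J hJ (1 - α * pt) (α * pt / k)
  have hmul : (∑ x : Fin Nb → Option (Fin k),
      if ((∀ j ∈ J, (x j).isSome = true) ∧
          (∀ i : Fin Nb, ∀ j ∈ J, i ≠ j → x i ≠ x j)) then
        α * (1 - pt) * ∏ i : Fin Nb, (x i).elim (1 - α * pt) (fun _ => α * pt / k) else 0)
      = α * (1 - pt) * (∑ x : Fin Nb → Option (Fin k),
      if ((∀ j ∈ J, (x j).isSome = true) ∧
          (∀ i : Fin Nb, ∀ j ∈ J, i ≠ j → x i ≠ x j)) then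
        (∏ i : Fin Nb, (x i).elim (1 - α * pt) (fun _ => α * pt / k)) else 0) := by
    rw [Finset.mul_sum]
    exact Finset.sum_congr rfl fun x _ => by rw [mul_ite, mul_zero]
  rw [hmul, key]
  have harith : 1 - α * pt + ((k : ℝ) - n) * (α * pt / k) = 1 - (n : ℝ) * (α * pt) / k := by
    field_simp
    ring
  rw [harith, div_pow]
  field_simp
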